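/- arXiv:1807.05420 — 3 statements merged into one kernel-verified Lean document; each statement's English description precedes it below -/
import Mathlib

section
/- Let η ∈ (0,1) and set θ = 1 − η. If ∫_{ℝ^d} (1+|ξ|²)^{−η} μ(dξ) < ∞, then there exists a constant C > 0 depending only on θ such that for all t > 0 and h > 0: sup_{η' ∈ ℝ^d} ∫_{ℝ^d} ( e^{−(t+h)|ξ+η'|²/2} − e^{−t|ξ+η'|²/2} )² μ(dξ) ≤ C h^θ t^{−θ} k(t/2). -/
open MeasureTheory Real ENNReal

/-- `k(t) = ∫_{ℝ^d} e^{-t |ξ|²} μ(dξ)`. -/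
noncomputable def heatK {d : ℕ} (μ : Measure (EuclideanSpace ℝ (Fin d))) (t : ℝ) : ℝ≥0∞ :=
  ∫⁻ ξ, ENNReal.ofReal (Real.exp (-t * ‖ξ‖ ^ 2)) ∂μ

/-- `μ` is the spectral measure of a nonnegative locally integrable function `f : ℝ^d → [0,∞)`,
i.e. `∫ f(x) φ(x) dx = ∫ Fφ(ξ) μ(dξ)` for every Schwartz function `φ : ℝ^d → ℂ`, where
`Fφ(ξ) = ∫ e^{-i ξ·x} φ(x) dx` is the Fourier transform. -/
def IsSpectralMeasureOfNonnegFn {d : ℕ} (μ : Measure (EuclideanSpace ℝ (Fin d))) : Prop :=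
  ∃ f : EuclideanSpace ℝ (Fin d) → ℝ,
    (∀ x, 0 ≤ f x) ∧ LocallyIntegrable f volume ∧
    ∀ φ : SchwartzMap (EuclideanSpace ℝ (Fin d)) ℂ,
      ∫ x, (f x : ℂ) * φ x =
        ∫ ξ, (∫ x, Complex.exp (-(Complex.I * ((@inner ℝ _ _ ξ x : ℝ) : ℂ))) * φ x) ∂μ

/-!
Put `u = h|ζ|²/2` and `v = t|ζ|²/2`. Then `(e^{-(t+h)|ζ|²/2} - e^{-t|ζ|²/2})² = e^{-2v} (1 - e^{-u})²`,
and `(1 - e^{-u})² ≤ min 1 u ≤ u^θ`, `u^θ = (h/t)^θ v^θ`, `v^θ e^{-v} ≤ 1` give the pointwise bound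
`(h/t)^θ e^{-v}`; so the theorem holds with `C = 1` once the shift `η'` is removed.

For the shift, test the spectral identity against the modulated Gaussian
`φ(x) = exp (-|x|²/(2t) - i⟪η', x⟫)`, whose Fourier transform is a positive multiple of
`e^{-t|ξ+η'|²/2}`. Since `f ≥ 0` and `|φ|` is the unmodulated Gaussian,
`|∫ f φ| ≤ ∫ f |φ|` turns into `∫ e^{-t|ξ+η'|²/2} μ(dξ) ≤ ∫ e^{-t|ξ|²/2} μ(dξ)`.
-/

open scoped ContDiff RealInnerProductSpace SchwartzMap

open Complex in
theorem norm_iteratedFDeriv_cexp_comp_le {E : Type*} [NormedAddCommGroup E] [NormedSpace ℝ E]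
    {g : E → ℂ} (hg : g.HasTemperateGrowth) (n : ℕ) :
    ∃ (k : ℕ) (C : ℝ), 0 ≤ C ∧ ∀ i ≤ n, ∀ x,
      ‖iteratedFDeriv ℝ i (fun x ↦ cexp (g x)) x‖ ≤ C * (1 + ‖x‖) ^ k * ‖cexp (g x)‖ := by
  induction n with
  | zero => exact ⟨0, 1, zero_le_one, fun i hi x ↦ by
      obtain rfl := Nat.le_zero.mp hi
      simp⟩
  | succ n ih =>
    obtain ⟨k, C, hC, hbound⟩ := ih
    obtain ⟨k', C', -, hg'⟩ := hg.norm_iteratedFDeriv_le_uniform (n + 1)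
    have hcd : ContDiff ℝ ∞ (fun x ↦ cexp (g x)) := hg.1.cexp
    have hfderiv : fderiv ℝ (fun x ↦ cexp (g x)) = fun x ↦ cexp (g x) • fderiv ℝ g x :=
      funext fun x ↦ ((hg.1.differentiable (by simp) x).hasFDerivAt.cexp).fderiv
    refine ⟨k + k', max C (2 ^ n * C * C'), le_max_of_le_left hC, fun i hi x ↦ ?_⟩
    rcases Nat.lt_or_eq_of_le hi with hi | rfl
    · calc _ ≤ C * (1 + ‖x‖) ^ k * ‖cexp (g x)‖ := hbound i (Nat.lt_succ_iff.mp hi) x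
        _ ≤ _ := by
          gcongr
          exacts [le_max_left _ _, le_add_of_nonneg_right (norm_nonneg x), Nat.le_add_right _ _]
    have hleib := norm_iteratedFDeriv_smul_le hcd (hg.1.fderiv_right (m := ∞) le_rfl) x
      (n := n) (mod_cast le_top)
    rw [← norm_iteratedFDeriv_fderiv, hfderiv]
    refine hleib.trans ?_
    calc _ ≤ ∑ j ∈ Finset.range (n + 1), (n.choose j : ℝ) *
          (C * (1 + ‖x‖) ^ k * ‖cexp (g x)‖) * (C' * (1 + ‖x‖) ^ k') := by
          gcongr with j hj
          · exact hbound j (Nat.lt_succ_iff.mp (Finset.mem_range.mp hj)) x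
          · rw [norm_iteratedFDeriv_fderiv]
            exact hg' _ (by omega) x
      _ = 2 ^ n * C * C' * (1 + ‖x‖) ^ (k + k') * ‖cexp (g x)‖ := by
          rw [← Finset.sum_mul, ← Finset.sum_mul, ← Nat.cast_sum, Nat.sum_range_choose]
          push_cast; ring
      _ ≤ _ := by gcongr; exact le_max_right _ _

theorem one_add_pow_mul_exp_neg_mul_sq_le {b r : ℝ} (hb : 0 < b) (hr : 0 ≤ r) (K : ℕ) :
    (1 + r) ^ K * rexp (-b * r ^ 2) ≤ rexp (K ^ 2 / (4 * b)) := by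
  have hpow : (1 + r) ^ K ≤ rexp (K * r) := by
    rw [Real.exp_nat_mul]
    gcongr
    linarith [Real.add_one_le_exp r]
  calc (1 + r) ^ K * rexp (-b * r ^ 2) ≤ rexp (K * r) * rexp (-b * r ^ 2) := by gcongr
    _ = rexp (K * r - b * r ^ 2) := by rw [← Real.exp_add]; ring_nf
    _ ≤ rexp (K ^ 2 / (4 * b)) := by
        gcongr
        rw [le_div_iff₀ (by positivity)]
        nlinarith [sq_nonneg (2 * b * r - K)]

section ModulatedGaussian

open Complex

variable {V : Type*} [NormedAddCommGroup V] [InnerProductSpace ℝ V]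

theorem norm_cexp_neg_mul_sq_add_I_mul_inner (b : ℝ) (w x : V) :
    ‖cexp ((-b * ‖x‖ ^ 2 : ℝ) + I * ⟪w, x⟫)‖ = rexp (-b * ‖x‖ ^ 2) := by
  rw [Complex.norm_exp]
  simp [-Complex.ofReal_pow]

theorem hasTemperateGrowth_neg_mul_sq_add_I_mul_inner (b : ℝ) (w : V) :
    (fun x : V ↦ ((-b * ‖x‖ ^ 2 : ℝ) : ℂ) + I * ⟪w, x⟫).HasTemperateGrowth := by
  fun_prop

noncomputable def modulatedGaussian (b : ℝ) (hb : 0 < b) (w : V) : 𝓢(V, ℂ) where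
  toFun x := cexp ((-b * ‖x‖ ^ 2 : ℝ) + I * ⟪w, x⟫)
  smooth' := (hasTemperateGrowth_neg_mul_sq_add_I_mul_inner b w).1.cexp
  decay' k n := by
    obtain ⟨m, C, hC, hbound⟩ :=
      norm_iteratedFDeriv_cexp_comp_le (hasTemperateGrowth_neg_mul_sq_add_I_mul_inner b w) n
    refine ⟨C * rexp ((k + m : ℕ) ^ 2 / (4 * b)), fun x ↦ ?_⟩
    have hx : ‖x‖ ≤ 1 + ‖x‖ := le_add_of_nonneg_left zero_le_one
    calc ‖x‖ ^ k * ‖iteratedFDeriv ℝ n _ x‖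
        ≤ (1 + ‖x‖) ^ k * (C * (1 + ‖x‖) ^ m * rexp (-b * ‖x‖ ^ 2)) := by
          rw [← norm_cexp_neg_mul_sq_add_I_mul_inner b w x]
          gcongr
          exact hbound n le_rfl x
      _ = C * ((1 + ‖x‖) ^ (k + m) * rexp (-b * ‖x‖ ^ 2)) := by ring
      _ ≤ C * rexp ((k + m : ℕ) ^ 2 / (4 * b)) := by
          gcongr
          exact one_add_pow_mul_exp_neg_mul_sq_le hb (norm_nonneg x) _

theorem modulatedGaussian_apply (b : ℝ) (hb : 0 < b) (w x : V) :
    modulatedGaussian b hb w x = cexp ((-b * ‖x‖ ^ 2 : ℝ) + I * ⟪w, x⟫) := rfl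

theorem integral_cexp_neg_I_mul_inner_mul_modulatedGaussian [FiniteDimensional ℝ V]
    [MeasurableSpace V] [BorelSpace V] (b : ℝ) (hb : 0 < b) (w ξ : V) :
    ∫ x, cexp (-(I * ⟪ξ, x⟫)) * modulatedGaussian b hb w x =
      ((π / b) ^ ((Module.finrank ℝ V : ℝ) / 2) * rexp (-‖ξ - w‖ ^ 2 / (4 * b)) : ℝ) := by
  have h := GaussianFourier.integral_cexp_neg_mul_sq_norm_add
    (b := (b : ℂ)) (by simpa using hb) I (w - ξ)
  calc ∫ x, cexp (-(I * ⟪ξ, x⟫)) * modulatedGaussian b hb w x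
      = ∫ x : V, cexp (-b * (‖x‖ : ℂ) ^ 2 + I * ⟪w - ξ, x⟫) := by
        congr 1
        funext x
        rw [modulatedGaussian_apply, ← Complex.exp_add]
        push_cast [inner_sub_left]
        ring_nf
    _ = _ := by
        rw [h, I_sq, norm_sub_rev]
        push_cast
        rw [Complex.ofReal_cpow (by positivity)]
        push_cast
        ring_nf

end ModulatedGaussian

section Spectral

variable {d : ℕ} {μ : Measure (EuclideanSpace ℝ (Fin d))}

theorem integral_exp_neg_mul_norm_add_sq_le (hspec : IsSpectralMeasureOfNonnegFn μ) {s : ℝ}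
    (hs : 0 < s) (w : EuclideanSpace ℝ (Fin d)) :
    ∫ ξ, rexp (-s * ‖ξ + w‖ ^ 2) ∂μ ≤ ∫ ξ, rexp (-s * ‖ξ‖ ^ 2) ∂μ := by
  obtain ⟨f, hf0, -, hfid⟩ := hspec
  set b : ℝ := (4 * s)⁻¹
  have hb : 0 < b := by positivity
  set K : ℝ := (π / b) ^ ((d : ℝ) / 2)
  have hK : 0 < K := by positivity
  have hident : ∀ v, ∫ x, (f x : ℂ) * modulatedGaussian b hb v x =
      ((K * ∫ ξ, rexp (-s * ‖ξ - v‖ ^ 2) ∂μ : ℝ) : ℂ) := by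
    intro v
    have hb' : ∀ r : ℝ, -r / (4 * b) = -s * r := fun r ↦ by simp only [b]; field_simp
    rw [hfid]
    simp_rw [integral_cexp_neg_I_mul_inner_mul_modulatedGaussian, finrank_euclideanSpace_fin,
      hb', integral_complex_ofReal, integral_const_mul]
    rfl
  have hnorm : ∀ v x, ‖(f x : ℂ) * modulatedGaussian b hb v x‖ = f x * rexp (-b * ‖x‖ ^ 2) :=
    fun v x ↦ by
      rw [norm_mul, modulatedGaussian_apply, norm_cexp_neg_mul_sq_add_I_mul_inner,
        Complex.norm_real, Real.norm_of_nonneg (hf0 x)]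
  have hcenter : ∫ x, f x * rexp (-b * ‖x‖ ^ 2) = K * ∫ ξ, rexp (-s * ‖ξ‖ ^ 2) ∂μ := by
    have h0 := hident 0
    simp only [sub_zero] at h0
    rw [← Complex.ofReal_inj, ← h0, ← integral_complex_ofReal]
    congr 1 with x
    simp [modulatedGaussian_apply, Complex.ofReal_exp]
  suffices K * ∫ ξ, rexp (-s * ‖ξ + w‖ ^ 2) ∂μ ≤ K * ∫ ξ, rexp (-s * ‖ξ‖ ^ 2) ∂μ from
    le_of_mul_le_mul_left this hK
  calc K * ∫ ξ, rexp (-s * ‖ξ + w‖ ^ 2) ∂μ = ‖∫ x, (f x : ℂ) * modulatedGaussian b hb (-w) x‖ := by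
        rw [hident, Complex.norm_real, Real.norm_of_nonneg (by positivity)]
        simp_rw [sub_neg_eq_add]
    _ ≤ ∫ x, f x * rexp (-b * ‖x‖ ^ 2) :=
        (norm_integral_le_integral_norm _).trans_eq (by simp_rw [hnorm])
    _ = K * ∫ ξ, rexp (-s * ‖ξ‖ ^ 2) ∂μ := hcenter

end Spectral

theorem exp_neg_mul_norm_add_sq_le {E : Type*} [SeminormedAddCommGroup E] {η s : ℝ} (hη : η ≤ 1)
    (hs : 0 < s) (w ξ : E) :
    rexp (-s * ‖ξ + w‖ ^ 2) ≤ (1 + 2 * ‖w‖ ^ 2) * (1 + 2 / s) * (1 + ‖ξ‖ ^ 2) ^ (-η) := by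
  set u := ‖ξ + w‖ ^ 2
  have hu : 0 ≤ u := sq_nonneg _
  have hweight : (1 + ‖ξ‖ ^ 2) ^ η ≤ 1 + ‖ξ‖ ^ 2 :=
    Real.rpow_le_self_of_one_le (le_add_of_nonneg_right (sq_nonneg _)) hη
  have hnorm : 1 + ‖ξ‖ ^ 2 ≤ (1 + 2 * ‖w‖ ^ 2) * (1 + 2 * u) := by
    have h := norm_sub_le (ξ + w) w
    rw [add_sub_cancel_right] at h
    nlinarith [sq_nonneg (‖ξ + w‖ - ‖w‖), norm_nonneg ξ, mul_nonneg (sq_nonneg ‖w‖) hu]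
  have hexp : (1 + 2 * u) * rexp (-s * u) ≤ 1 + 2 / s := by
    have h : 1 + 2 * u ≤ (1 + 2 / s) * rexp (s * u) := by
      have h1 : 1 + s * u ≤ rexp (s * u) := by linarith [Real.add_one_le_exp (s * u)]
      calc 1 + 2 * u ≤ (1 + 2 / s) * (1 + s * u) := by
            field_simp
            nlinarith [mul_nonneg hs.le hu]
        _ ≤ _ := by gcongr
    calc (1 + 2 * u) * rexp (-s * u) ≤ (1 + 2 / s) * rexp (s * u) * rexp (-s * u) := by gcongr
      _ = 1 + 2 / s := by rw [mul_assoc, ← Real.exp_add]; simp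
  rw [Real.rpow_neg (by positivity), ← div_eq_mul_inv, le_div_iff₀ (by positivity)]
  calc rexp (-s * u) * (1 + ‖ξ‖ ^ 2) ^ η ≤ rexp (-s * u) * ((1 + 2 * ‖w‖ ^ 2) * (1 + 2 * u)) := by
        gcongr
        exact hweight.trans hnorm
    _ = (1 + 2 * ‖w‖ ^ 2) * ((1 + 2 * u) * rexp (-s * u)) := by ring
    _ ≤ (1 + 2 * ‖w‖ ^ 2) * (1 + 2 / s) := by gcongr

theorem lintegral_exp_neg_mul_norm_add_sq_lt_top {E : Type*} [SeminormedAddCommGroup E]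
    [MeasurableSpace E] {μ : Measure E} {η s : ℝ} (hη : η ≤ 1) (hs : 0 < s)
    (hμ : ∫⁻ ξ, ENNReal.ofReal ((1 + ‖ξ‖ ^ 2) ^ (-η)) ∂μ < ⊤) (w : E) :
    ∫⁻ ξ, ENNReal.ofReal (rexp (-s * ‖ξ + w‖ ^ 2)) ∂μ < ⊤ := by
  set C := (1 + 2 * ‖w‖ ^ 2) * (1 + 2 / s)
  calc ∫⁻ ξ, ENNReal.ofReal (rexp (-s * ‖ξ + w‖ ^ 2)) ∂μ
      ≤ ∫⁻ ξ, ENNReal.ofReal C * ENNReal.ofReal ((1 + ‖ξ‖ ^ 2) ^ (-η)) ∂μ := by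
        refine lintegral_mono fun ξ ↦ ?_
        rw [← ENNReal.ofReal_mul (by positivity)]
        exact ENNReal.ofReal_le_ofReal (exp_neg_mul_norm_add_sq_le hη hs w ξ)
    _ = ENNReal.ofReal C * ∫⁻ ξ, ENNReal.ofReal ((1 + ‖ξ‖ ^ 2) ^ (-η)) ∂μ :=
        lintegral_const_mul' _ _ ENNReal.ofReal_ne_top
    _ < ⊤ := ENNReal.mul_lt_top ENNReal.ofReal_lt_top hμ

theorem lintegral_exp_neg_mul_norm_add_sq_le {d : ℕ} {μ : Measure (EuclideanSpace ℝ (Fin d))}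
    (hspec : IsSpectralMeasureOfNonnegFn μ) {s : ℝ} (hs : 0 < s) (w : EuclideanSpace ℝ (Fin d))
    (hfin : ∫⁻ ξ, ENNReal.ofReal (rexp (-s * ‖ξ + w‖ ^ 2)) ∂μ ≠ ⊤) :
    ∫⁻ ξ, ENNReal.ofReal (rexp (-s * ‖ξ + w‖ ^ 2)) ∂μ ≤
      ∫⁻ ξ, ENNReal.ofReal (rexp (-s * ‖ξ‖ ^ 2)) ∂μ := by
  have hpos : ∀ g : EuclideanSpace ℝ (Fin d) → ℝ, 0 ≤ᵐ[μ] fun ξ ↦ rexp (g ξ) :=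
    fun g ↦ Filter.Eventually.of_forall fun ξ ↦ (Real.exp_pos _).le
  calc ∫⁻ ξ, ENNReal.ofReal (rexp (-s * ‖ξ + w‖ ^ 2)) ∂μ
      = ENNReal.ofReal (∫ ξ, rexp (-s * ‖ξ + w‖ ^ 2) ∂μ) := by
        rw [integral_eq_lintegral_of_nonneg_ae (hpos _) (by fun_prop), ENNReal.ofReal_toReal hfin]
    _ ≤ ENNReal.ofReal (∫ ξ, rexp (-s * ‖ξ‖ ^ 2) ∂μ) :=
        ENNReal.ofReal_le_ofReal (integral_exp_neg_mul_norm_add_sq_le hspec hs w)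
    _ ≤ ∫⁻ ξ, ENNReal.ofReal (rexp (-s * ‖ξ‖ ^ 2)) ∂μ := by
        rw [integral_eq_lintegral_of_nonneg_ae (hpos _) (by fun_prop)]
        exact ENNReal.ofReal_toReal_le

theorem min_one_le_rpow {x y : ℝ} (hx : 0 ≤ x) (hy₀ : 0 ≤ y) (hy₁ : y ≤ 1) : min 1 x ≤ x ^ y := by
  rcases le_total x 1 with h | h
  · exact (min_le_right _ _).trans (Real.self_le_rpow_of_le_one hx h hy₁)
  · exact (min_le_left _ _).trans (Real.one_le_rpow h hy₀)

theorem rpow_le_max_one {x y : ℝ} (hx : 0 ≤ x) (hy₀ : 0 ≤ y) (hy₁ : y ≤ 1) : x ^ y ≤ max 1 x := by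
  rcases le_total x 1 with h | h
  · exact (Real.rpow_le_one hx h hy₀).trans (le_max_left _ _)
  · exact (Real.rpow_le_self_of_one_le h hy₁).trans (le_max_right _ _)

theorem one_sub_exp_neg_sq_le_rpow {u θ : ℝ} (hu : 0 ≤ u) (hθ₀ : 0 ≤ θ) (hθ₁ : θ ≤ 1) :
    (1 - rexp (-u)) ^ 2 ≤ u ^ θ := by
  have h₀ : 0 ≤ 1 - rexp (-u) := by linarith [Real.exp_le_one_iff.mpr (neg_nonpos.mpr hu)]
  have h₁ : 1 - rexp (-u) ≤ min 1 u :=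
    le_min (by linarith [Real.exp_pos (-u)]) (by linarith [Real.add_one_le_exp (-u)])
  calc (1 - rexp (-u)) ^ 2 ≤ 1 * min 1 u := by
        rw [sq]; exact mul_le_mul (h₁.trans (min_le_left _ _)) h₁ h₀ zero_le_one
    _ ≤ u ^ θ := by rw [one_mul]; exact min_one_le_rpow hu hθ₀ hθ₁

theorem rpow_mul_exp_neg_le_one {v θ : ℝ} (hv : 0 ≤ v) (hθ₀ : 0 ≤ θ) (hθ₁ : θ ≤ 1) :
    v ^ θ * rexp (-v) ≤ 1 := by
  calc v ^ θ * rexp (-v) ≤ rexp v * rexp (-v) := by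
        gcongr
        exact (rpow_le_max_one hv hθ₀ hθ₁).trans
          (max_le (by linarith [Real.add_one_le_exp v]) (by linarith [Real.add_one_le_exp v]))
    _ = 1 := by rw [← Real.exp_add]; simp

theorem sq_exp_sub_exp_le {θ t h a : ℝ} (hθ₀ : 0 ≤ θ) (hθ₁ : θ ≤ 1) (ht : 0 < t) (hh : 0 < h)
    (ha : 0 ≤ a) :
    (rexp (-(t + h) * a / 2) - rexp (-t * a / 2)) ^ 2 ≤ h ^ θ * t ^ (-θ) * rexp (-(t / 2) * a) := by
  set u := h * a / 2
  set v := t * a / 2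
  have hv : 0 ≤ v := by positivity
  calc (rexp (-(t + h) * a / 2) - rexp (-t * a / 2)) ^ 2
      = rexp (-v) ^ 2 * (1 - rexp (-u)) ^ 2 := by
        rw [show -(t + h) * a / 2 = -v + -u by ring, show -t * a / 2 = -v by ring, Real.exp_add]
        ring
    _ ≤ rexp (-v) ^ 2 * ((h / t) ^ θ * v ^ θ) := by
        rw [← Real.mul_rpow (by positivity) hv, show h / t * v = u by simp only [u, v]; field_simp]
        gcongr
        exact one_sub_exp_neg_sq_le_rpow (by positivity) hθ₀ hθ₁
    _ = (h / t) ^ θ * (v ^ θ * rexp (-v)) * rexp (-v) := by ring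
    _ ≤ (h / t) ^ θ * 1 * rexp (-v) := by gcongr; exact rpow_mul_exp_neg_le_one hv hθ₀ hθ₁
    _ = h ^ θ * t ^ (-θ) * rexp (-(t / 2) * a) := by
        rw [mul_one, Real.div_rpow hh.le ht.le, Real.rpow_neg ht.le, div_eq_mul_inv]
        simp only [v]
        ring_nf

theorem sup_time_increment_bound_general (d : ℕ)
    (μ : Measure (EuclideanSpace ℝ (Fin d))) (hspec : IsSpectralMeasureOfNonnegFn μ)
    (η : ℝ) (hη : η ∈ Set.Ioo (0 : ℝ) 1)
    (hμ : ∫⁻ ξ, ENNReal.ofReal ((1 + ‖ξ‖ ^ 2) ^ (-η)) ∂μ < ⊤) :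
    ∃ C : ℝ, 0 < C ∧ ∀ t h : ℝ, 0 < t → 0 < h →
      (⨆ η' : EuclideanSpace ℝ (Fin d),
          ∫⁻ ξ, ENNReal.ofReal
            ((Real.exp (-(t + h) * ‖ξ + η'‖ ^ 2 / 2) - Real.exp (-t * ‖ξ + η'‖ ^ 2 / 2)) ^ 2) ∂μ)
        ≤ ENNReal.ofReal (C * h ^ (1 - η) * t ^ (-(1 - η))) * heatK μ (t / 2) := by
  obtain ⟨hη₀, hη₁⟩ := hη
  refine ⟨1, one_pos, fun t h ht hh ↦ iSup_le fun w ↦ ?_⟩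
  have ht₂ : 0 < t / 2 := half_pos ht
  calc ∫⁻ ξ, ENNReal.ofReal
        ((rexp (-(t + h) * ‖ξ + w‖ ^ 2 / 2) - rexp (-t * ‖ξ + w‖ ^ 2 / 2)) ^ 2) ∂μ
      ≤ ∫⁻ ξ, ENNReal.ofReal (h ^ (1 - η) * t ^ (-(1 - η))) *
          ENNReal.ofReal (rexp (-(t / 2) * ‖ξ + w‖ ^ 2)) ∂μ := by
        refine lintegral_mono fun ξ ↦ ?_
        rw [← ENNReal.ofReal_mul (by positivity)]
        exact ENNReal.ofReal_le_ofReal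
          (sq_exp_sub_exp_le (by linarith) (by linarith) ht hh (sq_nonneg _))
    _ = ENNReal.ofReal (h ^ (1 - η) * t ^ (-(1 - η))) *
          ∫⁻ ξ, ENNReal.ofReal (rexp (-(t / 2) * ‖ξ + w‖ ^ 2)) ∂μ :=
        lintegral_const_mul' _ _ ENNReal.ofReal_ne_top
    _ ≤ ENNReal.ofReal (1 * h ^ (1 - η) * t ^ (-(1 - η))) * heatK μ (t / 2) := by
        rw [one_mul, heatK]
        gcongr ENNReal.ofReal _ * ?_
        exact lintegral_exp_neg_mul_norm_add_sq_le hspec ht₂ w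
          (lintegral_exp_neg_mul_norm_add_sq_lt_top hη₁.le ht₂ hμ w).ne

/-- If `∫ (1+|ξ|²)^{-η} μ(dξ) < ∞` for some `η ∈ (0,1)` and `θ = 1 - η`, then there is a
constant `C > 0` depending only on `θ` such that for all `t > 0` and `h > 0`,
the supremum over shifts `η'` of `∫ (FG(t+h)(ξ+η') - FG(t)(ξ+η'))² μ(dξ)` is at most
`C h^θ t^{-θ} k(t/2)`. -/
theorem sup_time_increment_bound (d : ℕ) (hd : 1 ≤ d)
    (μ : Measure (EuclideanSpace ℝ (Fin d))) (hspec : IsSpectralMeasureOfNonnegFn μ)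
    (η : ℝ) (hη : η ∈ Set.Ioo (0 : ℝ) 1)
    (hμ : ∫⁻ ξ, ENNReal.ofReal ((1 + ‖ξ‖ ^ 2) ^ (-η)) ∂μ < ⊤) :
    ∃ C : ℝ, 0 < C ∧ ∀ t h : ℝ, 0 < t → 0 < h →
      (⨆ η' : EuclideanSpace ℝ (Fin d),
          ∫⁻ ξ, ENNReal.ofReal
            ((Real.exp (-(t + h) * ‖ξ + η'‖ ^ 2 / 2) - Real.exp (-t * ‖ξ + η'‖ ^ 2 / 2)) ^ 2) ∂μ)
        ≤ ENNReal.ofReal (C * h ^ (1 - η) * t ^ (-(1 - η))) * heatK μ (t / 2) :=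
  sup_time_increment_bound_general d μ hspec η hη hμ
end

section
/- Let η ∈ (0,1). Then ∫_{ℝ^d} (1+|ξ|²)^{−η} μ(dξ) < ∞ if and only if ∫_0^1 k(s) / s^{1−η} ds < ∞. -/
/-!
By Tonelli, `∫₀¹ k(s) s^(η-1) ds = ∫ w(|ξ|²) dμ(ξ)` with `w(r) = ∫₀¹ s^(η-1) e^(-rs) ds`, and
`w(r)` is comparable to `(1 + r)^(-η)`: from above by `e^(-rs) ≤ e · e^(-(1+r)s)` and extending the
integral to `(0, ∞)`, where it is `Γ(η) (1 + r)^(-η)`; from below by restricting to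
`s ≤ 1 / (1 + r)`, where `e^(-rs) ≥ e⁻¹`.

Tonelli needs `μ` to be s-finite. Each of the two finiteness conditions provides this: each makes
some everywhere positive function `μ`-integrable (`(1 + |ξ|²)^(-η)`, resp. `e^(-t|ξ|²)` for a `t`
with `k(t) < ∞`), and then `μ` has an everywhere finite density with respect to a finite measure.
-/

open MeasureTheory Real ENNReal

open Set

lemma sigmaFinite_of_lintegral_ne_top {α : Type*} [MeasurableSpace α] {μ : Measure α}
    {f : α → ℝ≥0∞} (hf : Measurable f) (hf_ne_zero : ∀ x, f x ≠ 0) (hint : ∫⁻ x, f x ∂μ ≠ ∞) :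
    SigmaFinite μ := by
  have := isFiniteMeasure_withDensity hint
  have : SigmaFinite ((μ.withDensity f).withDensity fun x ↦ (f x)⁻¹) :=
    SigmaFinite.withDensity_of_ne_top' fun x ↦ ENNReal.inv_ne_top.2 (hf_ne_zero x)
  rwa [withDensity_inv_same hf (ae_of_all _ hf_ne_zero) (ae_lt_top hf hint).ne_of_lt] at this

lemma lintegral_lt_top_of_le_const_mul {α : Type*} [MeasurableSpace α] {μ : Measure α}
    {f g : α → ℝ≥0∞} {c : ℝ≥0∞} (hc : c ≠ ∞) (hfg : ∀ x, f x ≤ c * g x)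
    (hg : ∫⁻ x, g x ∂μ < ∞) : ∫⁻ x, f x ∂μ < ∞ :=
  (lintegral_mono hfg).trans_lt <| by
    rw [lintegral_const_mul' _ _ hc]; exact mul_lt_top hc.lt_top hg

/-- `heatWeight η r = r ^ (-η) * γ(η, r)`, with `γ` the lower incomplete Gamma function. -/
noncomputable def heatWeight (η r : ℝ) : ℝ≥0∞ :=
  ∫⁻ s in Ioo 0 1, ENNReal.ofReal (s ^ (η - 1) * exp (-(r * s)))

lemma setLIntegral_Ioo_rpow {c a : ℝ} (hc : -1 < c) (ha : 0 ≤ a) :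
    ∫⁻ s in Ioo 0 a, ENNReal.ofReal (s ^ c) = ENNReal.ofReal (a ^ (c + 1) / (c + 1)) := by
  rw [← ofReal_integral_eq_lintegral_ofReal, ← integral_Ioc_eq_integral_Ioo,
    ← intervalIntegral.integral_of_le ha, integral_rpow (Or.inl hc),
    Real.zero_rpow (by linarith), sub_zero]
  · exact (intervalIntegral.intervalIntegrable_rpow' hc).1.mono_set Ioo_subset_Ioc_self
  · exact (ae_restrict_iff' measurableSet_Ioo).2 (ae_of_all _ fun s hs ↦ rpow_nonneg hs.1.le c)

lemma ofReal_one_add_rpow_neg_le_heatWeight {η r : ℝ} (hη : 0 < η) (hr : 0 ≤ r) :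
    ENNReal.ofReal ((1 + r) ^ (-η)) ≤ ENNReal.ofReal (exp 1 * η) * heatWeight η r := by
  set s₀ := (1 + r)⁻¹
  have hs₀ : 0 < s₀ := by positivity
  have hs₀_le : s₀ ≤ 1 := inv_le_one_of_one_le₀ (by linarith)
  have hrs : ∀ s ∈ Ioo 0 s₀, r * s ≤ 1 := fun s hs ↦
    calc r * s ≤ r * s₀ := by gcongr; exact hs.2.le
      _ ≤ 1 := by rw [mul_inv_le_iff₀ (by linarith)]; linarith
  calc ENNReal.ofReal ((1 + r) ^ (-η))
      = ENNReal.ofReal (exp 1 * η) * ENNReal.ofReal (exp (-1) * (s₀ ^ η / η)) := by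
        rw [← ENNReal.ofReal_mul (by positivity), inv_rpow (by linarith), ← rpow_neg (by linarith),
          exp_neg]
        congr 1
        field_simp
    _ = ENNReal.ofReal (exp 1 * η) * ∫⁻ s in Ioo 0 s₀, ENNReal.ofReal (exp (-1) * s ^ (η - 1)) := by
        simp_rw [ENNReal.ofReal_mul (exp_nonneg _)]
        rw [lintegral_const_mul' _ _ ofReal_ne_top, setLIntegral_Ioo_rpow (by linarith) hs₀.le,
          sub_add_cancel]
    _ ≤ ENNReal.ofReal (exp 1 * η) * heatWeight η r := by
        gcongr
        refine (setLIntegral_mono' measurableSet_Ioo fun s hs ↦ ?_).trans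
          (lintegral_mono_set (Ioo_subset_Ioo_right hs₀_le))
        rw [mul_comm]
        gcongr
        · exact rpow_nonneg hs.1.le _
        · exact hrs s hs

lemma heatWeight_le {η r : ℝ} (hη : 0 < η) (hr : 0 ≤ r) :
    heatWeight η r ≤ ENNReal.ofReal (exp 1 * Gamma η) * ENNReal.ofReal ((1 + r) ^ (-η)) := by
  have hr₁ : 0 < 1 + r := by linarith
  have hint : IntegrableOn (fun s ↦ s ^ (η - 1) * exp (-((1 + r) * s))) (Ioi 0) := by
    refine (integrableOn_rpow_mul_exp_neg_mul_rpow (by linarith : -1 < η - 1) one_pos hr₁).congr_fun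
      (fun s _ ↦ ?_) measurableSet_Ioi
    simp only [Real.rpow_one, neg_mul]
  calc heatWeight η r
      ≤ ∫⁻ s in Ioi 0, ENNReal.ofReal (exp 1 * (s ^ (η - 1) * exp (-((1 + r) * s)))) := by
        refine (setLIntegral_mono' measurableSet_Ioo fun s hs ↦ ?_).trans
          (lintegral_mono_set Ioo_subset_Ioi_self)
        rw [mul_left_comm, ← exp_add]
        gcongr
        · exact rpow_nonneg hs.1.le _
        · linarith [hs.2]
    _ = ENNReal.ofReal (exp 1 * Gamma η) * ENNReal.ofReal ((1 + r) ^ (-η)) := by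
        rw [← ofReal_integral_eq_lintegral_ofReal (hint.const_mul _), integral_const_mul,
          integral_rpow_mul_exp_neg_mul_Ioi hη hr₁, ← ENNReal.ofReal_mul (by positivity)]
        · rw [one_div, inv_rpow hr₁.le, ← rpow_neg hr₁.le]
          ring_nf
        · exact (ae_restrict_iff' measurableSet_Ioi).2
            (ae_of_all _ fun s hs ↦ by have := rpow_nonneg (le_of_lt hs) (η - 1); positivity)

section heatK

variable {d : ℕ} {μ : Measure (EuclideanSpace ℝ (Fin d))}

lemma sigmaFinite_of_heatK_ne_top {t : ℝ} (ht : heatK μ t ≠ ∞) : SigmaFinite μ :=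
  sigmaFinite_of_lintegral_ne_top (by fun_prop) (fun _ ↦ (ofReal_pos.2 (exp_pos _)).ne') ht

lemma exists_heatK_ne_top {f : ℝ → ℝ≥0∞} (hf : ∀ s, f s ≠ ∞)
    (h : ∫⁻ s in Ioo 0 1, heatK μ s / f s < ∞) : ∃ t, heatK μ t ≠ ∞ := by
  by_contra! htop
  refine h.ne ?_
  rw [setLIntegral_congr_fun measurableSet_Ioo fun s _ ↦ by rw [htop s, top_div_of_ne_top (hf s)],
    setLIntegral_const, Real.volume_Ioo]
  simp

lemma setLIntegral_heatK_div_rpow [SFinite μ] (η : ℝ) :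
    ∫⁻ s in Ioo 0 1, heatK μ s / ENNReal.ofReal (s ^ (1 - η)) =
      ∫⁻ ξ, heatWeight η (‖ξ‖ ^ 2) ∂μ := by
  have hpoint : ∀ s ∈ Ioo (0 : ℝ) 1, heatK μ s / ENNReal.ofReal (s ^ (1 - η)) =
      ∫⁻ ξ, ENNReal.ofReal (s ^ (η - 1) * exp (-(‖ξ‖ ^ 2 * s))) ∂μ := fun s hs ↦ by
    rw [div_eq_mul_inv, ← ofReal_inv_of_pos (rpow_pos_of_pos hs.1 _), ← rpow_neg hs.1.le, neg_sub,
      heatK, ← lintegral_mul_const' _ _ ofReal_ne_top]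
    congr with ξ
    rw [← ENNReal.ofReal_mul (exp_nonneg _), mul_comm, neg_mul, mul_comm s]
  rw [setLIntegral_congr_fun measurableSet_Ioo hpoint,
    lintegral_lintegral_swap (Measurable.aemeasurable (by fun_prop))]
  rfl

end heatK

theorem spectral_condition_iff_k_integrable_general (d : ℕ)
    (μ : Measure (EuclideanSpace ℝ (Fin d))) (η : ℝ) (hη : η ∈ Set.Ioo (0 : ℝ) 1) :
    (∫⁻ ξ, ENNReal.ofReal ((1 + ‖ξ‖ ^ 2) ^ (-η)) ∂μ < ⊤) ↔
      (∫⁻ s in Set.Ioo (0 : ℝ) 1, heatK μ s / ENNReal.ofReal (s ^ (1 - η)) < ⊤) := by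
  by_cases hμ : SigmaFinite μ
  · rw [setLIntegral_heatK_div_rpow]
    exact ⟨lintegral_lt_top_of_le_const_mul ofReal_ne_top fun _ ↦ heatWeight_le hη.1 (sq_nonneg _),
      lintegral_lt_top_of_le_const_mul ofReal_ne_top fun _ ↦
        ofReal_one_add_rpow_neg_le_heatWeight hη.1 (sq_nonneg _)⟩
  refine iff_of_false (fun h ↦ hμ ?_) (fun h ↦ hμ ?_)
  · refine sigmaFinite_of_lintegral_ne_top (by fun_prop) (fun ξ ↦ ?_) h.ne
    exact (ofReal_pos.2 (rpow_pos_of_pos (by positivity) _)).ne'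
  · obtain ⟨t, ht⟩ := exists_heatK_ne_top (fun _ ↦ ofReal_ne_top) h
    exact sigmaFinite_of_heatK_ne_top ht

/-- For `η ∈ (0,1)`: `∫ (1+|ξ|²)^{-η} μ(dξ) < ∞` iff `∫_0^1 k(s)/s^{1-η} ds < ∞`. -/
theorem spectral_condition_iff_k_integrable (d : ℕ) (hd : 1 ≤ d)
    (μ : Measure (EuclideanSpace ℝ (Fin d))) (η : ℝ) (hη : η ∈ Set.Ioo (0 : ℝ) 1) :
    (∫⁻ ξ, ENNReal.ofReal ((1 + ‖ξ‖ ^ 2) ^ (-η)) ∂μ < ⊤) ↔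
      (∫⁻ s in Set.Ioo (0 : ℝ) 1, heatK μ s / ENNReal.ofReal (s ^ (1 - η)) < ⊤) :=
  spectral_condition_iff_k_integrable_general d μ η hη
end

section
/- Let θ ∈ (0,1), let n ≥ 1 be an integer and let t > 0. Then ∫_{0<t_1<⋯<t_n<t} ( ∏_{j=1}^{n−1} k(t_{j+1}−t_j) ) (t−t_n)^{−θ} k((t−t_n)/2) dt_1 ⋯ dt_n = ∫_0^t h_{n−1}(s) (t−s)^{−θ} k((t−s)/2) ds ≤ h_{n−1}(t) · ∫_0^t s^{−θ} k(s/2) ds. -/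
open MeasureTheory Real ENNReal

/-- `h_0(t) = 1` and, for `n = m + 1 ≥ 1`,
`h_n(t) = ∫_{0 < t_1 < ⋯ < t_n < t} k(t_2 - t_1) ⋯ k(t_n - t_{n-1}) k(t - t_n) dt_1 ⋯ dt_n`. -/
noncomputable def hSeq {d : ℕ} (μ : Measure (EuclideanSpace ℝ (Fin d))) : ℕ → ℝ → ℝ≥0∞
  | 0, _ => 1
  | (m + 1), t =>
    ∫⁻ s in {s : Fin (m + 1) → ℝ | StrictMono s ∧ 0 < s 0 ∧ s (Fin.last m) < t},
      (∏ j : Fin m, heatK μ (s j.succ - s j.castSucc)) * heatK μ (t - s (Fin.last m))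

/-!
Splitting off the last coordinate of the simplex `{0 < s₀ < ⋯ < sₘ < t}` (Fubini along
`Fin.snoc`) turns the simplex integral into `∫₀ᵗ hₘ(r) f(r) dr`: for fixed `sₘ = r` the remaining
integral is `hₘ(r)` itself. The inequality then comes from the monotonicity of `hₘ`, since the
translate by `b - a` of the simplex for `a` lies in the simplex for `b` and carries the
integrand for `a` to the one for `b`, followed by the reflection `s ↦ t - s` of `(0, t)`.
-/

open Set

lemma Fin.strictMono_snoc_iff {α : Type*} [Preorder α] {n : ℕ} {u : Fin (n + 1) → α}
    {r : α} :
    StrictMono (Fin.snoc u r : Fin (n + 2) → α) ↔ StrictMono u ∧ u (Fin.last n) < r := by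
  refine ⟨fun h => ⟨?_, ?_⟩, fun ⟨hu, hr⟩ => ?_⟩
  · simpa [Function.comp_def] using h.comp Fin.strictMono_castSucc
  · simpa using h (Fin.castSucc_lt_last (Fin.last n))
  · simpa [Fin.insertNth_last'] using Fin.strictMono_insertNth_last hu r hr

lemma Fin.prod_snoc_sub {M : Type*} [CommMonoid M] (k : ℝ → M) {n : ℕ} (u : Fin (n + 1) → ℝ)
    (r : ℝ) :
    ∏ j : Fin (n + 1),
        k ((Fin.snoc u r : Fin (n + 2) → ℝ) j.succ - (Fin.snoc u r : Fin (n + 2) → ℝ) j.castSucc)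
      = (∏ j : Fin n, k (u j.succ - u j.castSucc)) * k (r - u (Fin.last n)) := by
  simp only [Fin.prod_univ_castSucc, Fin.succ_castSucc, Fin.snoc_castSucc, Fin.succ_last,
    Fin.snoc_last]

def orderedSimplex (n : ℕ) (t : ℝ) : Set (Fin (n + 1) → ℝ) :=
  {s | StrictMono s ∧ 0 < s 0 ∧ s (Fin.last n) < t}

lemma measurableSet_orderedSimplex (n : ℕ) (t : ℝ) : MeasurableSet (orderedSimplex n t) := by
  have hmono : MeasurableSet {s : Fin (n + 1) → ℝ | StrictMono s} := by
    simp_rw [Fin.strictMono_iff_lt_succ, ofPred_forall]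
    exact .iInter fun j => measurableSet_lt (measurable_pi_apply _) (measurable_pi_apply _)
  simp only [orderedSimplex, ofPred_and]
  exact hmono.inter ((measurableSet_lt measurable_const (measurable_pi_apply _)).inter
    (measurableSet_lt (measurable_pi_apply _) measurable_const))

lemma snoc_mem_orderedSimplex_iff {n : ℕ} {u : Fin (n + 1) → ℝ} {r t : ℝ} :
    Fin.snoc u r ∈ orderedSimplex (n + 1) t ↔ u ∈ orderedSimplex n r ∧ r ∈ Ioo 0 t := by
  have h0 : (Fin.snoc u r : Fin (n + 2) → ℝ) 0 = u 0 := Fin.snoc_castSucc (i := 0) ..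
  simp only [orderedSimplex, mem_ofPred_eq, mem_Ioo, h0, Fin.snoc_last,
    Fin.strictMono_snoc_iff]
  constructor
  · rintro ⟨⟨hu, hlast⟩, h0u, hrt⟩
    exact ⟨⟨hu, h0u, hlast⟩, h0u.trans_le (hu.monotone (Fin.zero_le _)) |>.trans hlast, hrt⟩
  · rintro ⟨⟨hu, h0u, hlast⟩, -, hrt⟩
    exact ⟨⟨hu, hlast⟩, h0u, hrt⟩

lemma setLIntegral_orderedSimplex_zero (t : ℝ) (F : (Fin 1 → ℝ) → ℝ≥0∞) :
    ∫⁻ s in orderedSimplex 0 t, F s = ∫⁻ r in Ioo 0 t, F (fun _ => r) := by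
  have hpre : orderedSimplex 0 t = MeasurableEquiv.funUnique (Fin 1) ℝ ⁻¹' Ioo 0 t := by
    ext s
    simp [orderedSimplex, Subsingleton.strictMono (α := Fin 1) s]
  rw [hpre, ← (volume_preserving_funUnique (Fin 1) ℝ).setLIntegral_comp_preimage_emb
    (MeasurableEquiv.funUnique (Fin 1) ℝ).measurableEmbedding]
  refine lintegral_congr fun s => congr_arg F (funext fun i => ?_)
  simp [Subsingleton.elim (α := Fin 1) i 0]

lemma setLIntegral_orderedSimplex_succ {n : ℕ} {t : ℝ} {F : (Fin (n + 2) → ℝ) → ℝ≥0∞}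
    (hF : Measurable F) :
    ∫⁻ s in orderedSimplex (n + 1) t, F s
      = ∫⁻ r in Ioo 0 t, ∫⁻ u in orderedSimplex n r, F (Fin.snoc u r) := by
  set S := orderedSimplex (n + 1) t
  set e := (MeasurableEquiv.piFinSuccAbove (fun _ : Fin (n + 2) => ℝ) (Fin.last (n + 1))).symm
  have he : ∀ p, e p = Fin.snoc p.2 p.1 := fun p => by simp [e, Fin.snocEquiv]
  have hfiber : ∀ r, ∫⁻ u, S.indicator F (Fin.snoc u r)
      = (Ioo 0 t).indicator (fun r => ∫⁻ u in orderedSimplex n r, F (Fin.snoc u r)) r := by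
    classical
    intro r
    by_cases hr : r ∈ Ioo 0 t
    · rw [indicator_of_mem hr, ← lintegral_indicator (measurableSet_orderedSimplex n r)]
      congr with u
      simp only [S, indicator_apply, snoc_mem_orderedSimplex_iff, hr, and_true]
    · simp only [S, indicator_apply, snoc_mem_orderedSimplex_iff, hr, and_false, if_false,
        lintegral_zero]
  calc ∫⁻ s in S, F s
      = ∫⁻ s, S.indicator F s := (lintegral_indicator (measurableSet_orderedSimplex _ _) F).symm
    _ = ∫⁻ p : ℝ × (Fin (n + 1) → ℝ), S.indicator F (e p) :=
        ((volume_preserving_piFinSuccAbove _ _).symm.lintegral_comp_emb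
          e.measurableEmbedding _).symm
    _ = ∫⁻ r, ∫⁻ u, S.indicator F (Fin.snoc u r) := by
        rw [Measure.volume_eq_prod, lintegral_prod (fun p => S.indicator F (e p))
          ((hF.indicator (measurableSet_orderedSimplex _ _)).comp e.measurable).aemeasurable]
        simp only [he]
    _ = ∫⁻ r in Ioo 0 t, ∫⁻ u in orderedSimplex n r, F (Fin.snoc u r) := by
        simp only [hfiber, lintegral_indicator measurableSet_Ioo]

section HeatKernel

variable {d : ℕ} (μ : Measure (EuclideanSpace ℝ (Fin d)))

lemma heatK_antitone : Antitone (heatK μ) := by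
  intro a b hab
  refine lintegral_mono fun ξ => ENNReal.ofReal_le_ofReal (Real.exp_le_exp.mpr ?_)
  nlinarith [sq_nonneg ‖ξ‖]

@[fun_prop]
lemma measurable_heatK : Measurable (heatK μ) := (heatK_antitone μ).measurable

lemma setLIntegral_orderedSimplex_prod_heatK_mul (m : ℕ) (t : ℝ) {f : ℝ → ℝ≥0∞}
    (hf : Measurable f) :
    ∫⁻ s in orderedSimplex m t,
        (∏ j : Fin m, heatK μ (s j.succ - s j.castSucc)) * f (s (Fin.last m))
      = ∫⁻ r in Ioo 0 t, hSeq μ m r * f r := by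
  cases m with
  | zero => simp [setLIntegral_orderedSimplex_zero, hSeq]
  | succ n =>
    rw [setLIntegral_orderedSimplex_succ (by fun_prop)]
    refine lintegral_congr fun r => ?_
    simp only [Fin.prod_snoc_sub, Fin.snoc_last]
    rw [lintegral_mul_const _ (by fun_prop)]
    rfl

lemma hSeq_monotone (m : ℕ) : Monotone (hSeq μ m) := by
  intro a b hab
  cases m with
  | zero => exact le_rfl
  | succ n =>
    set c : Fin (n + 1) → ℝ := fun _ => b - a
    have hshift : MeasurePreserving (· + c) volume volume := measurePreserving_add_right volume c
    have himage : (· + c) '' orderedSimplex n a ⊆ orderedSimplex n b := by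
      rintro _ ⟨u, ⟨hu, hu0, hlast⟩, rfl⟩
      refine ⟨fun i j hij => by simpa [c] using hu hij, ?_, ?_⟩ <;>
        simp only [c, Pi.add_apply] <;> linarith
    let G : (Fin (n + 1) → ℝ) → ℝ≥0∞ := fun v =>
      (∏ j : Fin n, heatK μ (v j.succ - v j.castSucc)) * heatK μ (b - v (Fin.last n))
    calc hSeq μ (n + 1) a
        = ∫⁻ u in orderedSimplex n a, G (u + c) := by
          refine lintegral_congr fun u => ?_
          simp only [G, c, Pi.add_apply, add_sub_add_right_eq_sub]
          congr 2
          ring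
      _ = ∫⁻ v in (· + c) '' orderedSimplex n a, G v :=
          hshift.setLIntegral_comp_emb (MeasurableEquiv.addRight c).measurableEmbedding G _
      _ ≤ ∫⁻ v in orderedSimplex n b, G v := lintegral_mono_set himage

end HeatKernel

lemma setLIntegral_Ioo_comp_const_sub (f : ℝ → ℝ≥0∞) (t : ℝ) :
    ∫⁻ x in Ioo 0 t, f (t - x) = ∫⁻ x in Ioo 0 t, f x := by
  have h := (Measure.measurePreserving_sub_left volume t).setLIntegral_comp_preimage_emb
    (MeasurableEquiv.subLeft t).measurableEmbedding f (Ioo 0 t)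
  rwa [preimage_const_sub_Ioo, sub_self, sub_zero] at h

theorem simplex_integral_eq_and_le_general (d : ℕ)
    (μ : Measure (EuclideanSpace ℝ (Fin d)))
    (θ : ℝ) (m : ℕ) (t : ℝ) :
    (∫⁻ s in {s : Fin (m + 1) → ℝ | StrictMono s ∧ 0 < s 0 ∧ s (Fin.last m) < t},
        (∏ j : Fin m, heatK μ (s j.succ - s j.castSucc))
          * (ENNReal.ofReal ((t - s (Fin.last m)) ^ (-θ)) * heatK μ ((t - s (Fin.last m)) / 2)))
      = ∫⁻ s in Set.Ioo (0 : ℝ) t,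
          hSeq μ m s * (ENNReal.ofReal ((t - s) ^ (-θ)) * heatK μ ((t - s) / 2))
    ∧ (∫⁻ s in Set.Ioo (0 : ℝ) t,
          hSeq μ m s * (ENNReal.ofReal ((t - s) ^ (-θ)) * heatK μ ((t - s) / 2)))
        ≤ hSeq μ m t * ∫⁻ s in Set.Ioo (0 : ℝ) t,
            ENNReal.ofReal (s ^ (-θ)) * heatK μ (s / 2) := by
  have hf : Measurable fun r => ENNReal.ofReal ((t - r) ^ (-θ)) * heatK μ ((t - r) / 2) := by
    fun_prop
  refine ⟨setLIntegral_orderedSimplex_prod_heatK_mul μ m t hf, ?_⟩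
  calc _ ≤ ∫⁻ s in Ioo 0 t,
          hSeq μ m t * (ENNReal.ofReal ((t - s) ^ (-θ)) * heatK μ ((t - s) / 2)) :=
        setLIntegral_mono' measurableSet_Ioo fun s hs =>
          mul_le_mul_left (hSeq_monotone μ m hs.2.le) _
    _ = hSeq μ m t * ∫⁻ s in Ioo 0 t,
          ENNReal.ofReal ((t - s) ^ (-θ)) * heatK μ ((t - s) / 2) :=
        lintegral_const_mul _ hf
    _ = _ := by
        rw [setLIntegral_Ioo_comp_const_sub fun s => ENNReal.ofReal (s ^ (-θ)) * heatK μ (s / 2)]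

/-- For `θ ∈ (0,1)`, `n = m + 1 ≥ 1` and `t > 0`:
`∫_{0<t_1<⋯<t_n<t} (∏_{j=1}^{n-1} k(t_{j+1}-t_j)) (t-t_n)^{-θ} k((t-t_n)/2) dt_1⋯dt_n`
`= ∫_0^t h_{n-1}(s) (t-s)^{-θ} k((t-s)/2) ds ≤ h_{n-1}(t) ∫_0^t s^{-θ} k(s/2) ds`. -/
theorem simplex_integral_eq_and_le (d : ℕ) (hd : 1 ≤ d)
    (μ : Measure (EuclideanSpace ℝ (Fin d)))
    (θ : ℝ) (hθ : θ ∈ Set.Ioo (0 : ℝ) 1) (m : ℕ) (t : ℝ) (ht : 0 < t) :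
    (∫⁻ s in {s : Fin (m + 1) → ℝ | StrictMono s ∧ 0 < s 0 ∧ s (Fin.last m) < t},
        (∏ j : Fin m, heatK μ (s j.succ - s j.castSucc))
          * (ENNReal.ofReal ((t - s (Fin.last m)) ^ (-θ)) * heatK μ ((t - s (Fin.last m)) / 2)))
      = ∫⁻ s in Set.Ioo (0 : ℝ) t,
          hSeq μ m s * (ENNReal.ofReal ((t - s) ^ (-θ)) * heatK μ ((t - s) / 2))
    ∧ (∫⁻ s in Set.Ioo (0 : ℝ) t,
          hSeq μ m s * (ENNReal.ofReal ((t - s) ^ (-θ)) * heatK μ ((t - s) / 2)))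
        ≤ hSeq μ m t * ∫⁻ s in Set.Ioo (0 : ℝ) t,
            ENNReal.ofReal (s ^ (-θ)) * heatK μ (s / 2) :=
  simplex_integral_eq_and_le_general d μ θ m t
end
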